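/- Bruggeman transform, forward direction. Let ν ∈ ℂ and f ∈ F_η. Define ψ(z) := f(z) - z^{-2ν-1} η(S) f(-1/z) for z ∈ ℂ∖ℝ, and assume that ψ extends to a holomorphic function (still denoted ψ) on ℂ∖(-∞,0]. Then: (a) ψ satisfies the Lewis equation η(T)ψ(z) = ψ(z+1) + (z+1)^{-2ν-1} η(ST⁻¹) ψ(z/(z+1)) for every z ∈ ℂ∖(-∞,0]; (b) the limits L₊ := lim_{Im z→+∞} (ψ(z) + z^{-2ν-1} η(S) ψ(-1/z)) and L₋ := lim_{Im z→-∞} (ψ(z) + z^{-2ν-1} η(S) ψ(-1/z)) exist and satisfy e^{πiν} L₊ + e^{-πiν} L₋ = 0. In other words, ψ ∈ Ψ_{ν,η}. -/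

import Mathlib

/-!
On each half-plane everything can be computed from `f`. Writing `s = -2ν-1`, the relations
`S² = -I` and `TST = ST⁻¹S` in `SL₂(ℤ)`, the periodicity `f(z+1) = η(T) f(z)` and the
identity `(z+1)^s (z/(z+1))^s = z^s` (valid for `Im z > 0`) give the Lewis equation on the upper
half-plane, and the identity theorem extends it to the slit plane. Since `η(S)² = 1`,
`ψ(z) + z^s η(S) ψ(-1/z) = (1 - z^s (-1/z)^s) f(z) = (1 - e^{±πis}) f(z)` for `±Im z > 0`.
As `η(T)` has finite order, `f` is periodic, so its `q`-expansion shows that it has limits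
`a, b` as `Im z → ±∞`, with `a + b = 0`; the limit condition then reduces to
`e^{πiν}(1 - e^{πis}) = e^{-πiν}(1 - e^{-πis})`.
-/

open Complex Filter Topology MeasureTheory Set

noncomputable section

abbrev SL2Z := Matrix.SpecialLinearGroup (Fin 2) ℤ

def Smat : SL2Z := ⟨!![0, 1; -1, 0], by decide⟩
def Tmat : SL2Z := ⟨!![1, 1; 0, 1], by decide⟩
def negI : SL2Z := ⟨!![-1, 0; 0, -1], by decide⟩

variable {V : Type} [NormedAddCommGroup V] [NormedSpace ℂ V]

/-- The space `F_η`. -/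
structure MemFeta (η : SL2Z →* (V →ₗ[ℂ] V)ˣ) (f : ℂ → V) : Prop where
  holo : DifferentiableOn ℂ f {z : ℂ | z.im ≠ 0}
  periodic : ∀ z : ℂ, z.im ≠ 0 → f (z + 1) = (η Tmat : V →ₗ[ℂ] V) (f z)
  bounded : ∃ C : ℝ, ∀ z : ℂ, 1 ≤ |z.im| → ‖f z‖ ≤ C
  limits : ∃ a b : V, Tendsto (fun t : ℝ => f ((t : ℂ) * I)) atTop (𝓝 a) ∧
    Tendsto (fun t : ℝ => f (-((t : ℂ) * I))) atTop (𝓝 b) ∧ a + b = 0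

/-- `ψ(z) + z^{-2ν-1} η(S) ψ(-1/z)`. -/
def lewisCombo (ν : ℂ) (η : SL2Z →* (V →ₗ[ℂ] V)ˣ) (ψ : ℂ → V) : ℂ → V :=
  fun z => ψ z + (z ^ (-2 * ν - 1)) • (η Smat : V →ₗ[ℂ] V) (ψ (-z⁻¹))

/-- The space `Ψ_{ν,η}`. -/
structure MemPsi (ν : ℂ) (η : SL2Z →* (V →ₗ[ℂ] V)ˣ) (ψ : ℂ → V) : Prop where
  holo : DifferentiableOn ℂ ψ Complex.slitPlane
  lewis : ∀ z ∈ Complex.slitPlane,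
    (η Tmat : V →ₗ[ℂ] V) (ψ z) =
      ψ (z + 1) + ((z + 1) ^ (-2 * ν - 1)) •
        (η (Smat * Tmat⁻¹) : V →ₗ[ℂ] V) (ψ (z / (z + 1)))
  limits : ∃ Lp Lm : V,
    Tendsto (lewisCombo ν η ψ) (comap Complex.im atTop) (𝓝 Lp) ∧
    Tendsto (lewisCombo ν η ψ) (comap Complex.im atBot) (𝓝 Lm) ∧
    Complex.exp (Real.pi * I * ν) • Lp + Complex.exp (-(Real.pi * I * ν)) • Lm = 0

open scoped Real

namespace Complex

lemma ne_zero_of_im_ne_zero {z : ℂ} (hz : z.im ≠ 0) : z ≠ 0 := by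
  rintro rfl; exact hz rfl

lemma im_neg_inv (z : ℂ) : (-z⁻¹).im = z.im / normSq z := by
  simp [neg_div]

lemma im_neg_inv_pos {z : ℂ} (hz : 0 < z.im) : 0 < (-z⁻¹).im := by
  rw [im_neg_inv]
  exact div_pos hz (normSq_pos.mpr (ne_zero_of_im_ne_zero hz.ne'))

lemma log_neg_inv_of_im_pos {z : ℂ} (hz : 0 < z.im) :
    log (-z⁻¹) = π * I - log z := by
  have harg : (-z).arg = z.arg - π := arg_neg_eq_arg_sub_pi_of_im_pos hz
  have hne : (-z).arg ≠ π := by rw [harg]; linarith [arg_le_pi z, Real.pi_pos]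
  apply Complex.ext
  · simp [log_re]
  · simp only [log_im, sub_im, mul_im, ofReal_re, I_im, ofReal_im, I_re]
    rw [neg_inv, arg_inv, if_neg hne, harg]; ring

lemma log_neg_inv_of_im_neg {z : ℂ} (hz : z.im < 0) :
    log (-z⁻¹) = -(π * I) - log z := by
  have harg : (-z).arg = z.arg + π := arg_neg_eq_arg_add_pi_of_im_neg hz
  have hne : (-z).arg ≠ π := by rw [harg]; linarith [arg_neg_iff.mpr hz]
  apply Complex.ext
  · simp [log_re]
  · simp only [log_im, sub_im, neg_im, mul_im, ofReal_re, I_im, ofReal_im, I_re]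
    rw [neg_inv, arg_inv, if_neg hne, harg]; ring

lemma log_div_add_one_of_im_pos {z : ℂ} (hz : 0 < z.im) :
    log (z / (z + 1)) = log z - log (z + 1) := by
  have hz1 : 0 < (z + 1).im := by simpa using hz
  have hz0 : z ≠ 0 := ne_zero_of_im_ne_zero hz.ne'
  have hne : (z + 1).arg ≠ π := fun h => hz1.ne' (arg_eq_pi_iff.mp h).2
  have hsum : z.arg + (z + 1)⁻¹.arg ∈ Ioc (-π) π := by
    have h1 : (z + 1).arg < π := arg_lt_pi_iff.mpr (Or.inr hz1.ne')
    rw [arg_inv, if_neg hne]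
    constructor <;> linarith [arg_le_pi z, arg_nonneg_iff.mpr hz.le, arg_nonneg_iff.mpr hz1.le]
  rw [div_eq_mul_inv, (log_mul_eq_add_log_iff hz0 (inv_ne_zero (ne_zero_of_im_ne_zero hz1.ne'))).mpr
    hsum, log_inv _ hne, sub_eq_add_neg]

lemma cpow_mul_neg_inv_cpow_of_im_pos {z : ℂ} (hz : 0 < z.im) (s : ℂ) :
    z ^ s * (-z⁻¹) ^ s = exp (π * I * s) := by
  have hz0 := ne_zero_of_im_ne_zero hz.ne'
  rw [cpow_def_of_ne_zero hz0, cpow_def_of_ne_zero (neg_ne_zero.mpr (inv_ne_zero hz0)),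
    ← exp_add, log_neg_inv_of_im_pos hz]
  ring_nf

lemma cpow_mul_neg_inv_cpow_of_im_neg {z : ℂ} (hz : z.im < 0) (s : ℂ) :
    z ^ s * (-z⁻¹) ^ s = exp (-(π * I) * s) := by
  have hz0 := ne_zero_of_im_ne_zero hz.ne
  rw [cpow_def_of_ne_zero hz0, cpow_def_of_ne_zero (neg_ne_zero.mpr (inv_ne_zero hz0)),
    ← exp_add, log_neg_inv_of_im_neg hz]
  ring_nf

lemma add_one_cpow_mul_div_add_one_cpow {z : ℂ} (hz : 0 < z.im) (s : ℂ) :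
    (z + 1) ^ s * (z / (z + 1)) ^ s = z ^ s := by
  have hz0 := ne_zero_of_im_ne_zero hz.ne'
  have hz10 : z + 1 ≠ 0 := ne_zero_of_im_ne_zero (by simpa using hz.ne')
  rw [cpow_def_of_ne_zero hz10, cpow_def_of_ne_zero (div_ne_zero hz0 hz10),
    cpow_def_of_ne_zero hz0, ← exp_add, log_div_add_one_of_im_pos hz]
  ring_nf

lemma add_one_mem_slitPlane {z : ℂ} (hz : z ∈ slitPlane) : z + 1 ∈ slitPlane := by
  rw [mem_slitPlane_iff] at hz ⊢
  rcases hz with h | h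
  · left; rw [add_re, one_re]; linarith
  · right; simpa using h

lemma div_add_one_mem_slitPlane {z : ℂ} (hz : z ∈ slitPlane) : z / (z + 1) ∈ slitPlane := by
  have hz1 := slitPlane_ne_zero (add_one_mem_slitPlane hz)
  rw [mem_slitPlane_iff] at hz ⊢
  rcases hz with h | h
  · have hn := normSq_pos.mpr hz1
    left
    rw [Complex.div_re]
    exact add_pos_of_pos_of_nonneg (div_pos (mul_pos h (by rw [add_re, one_re]; linarith)) hn)
      (div_nonneg (by simp [mul_self_nonneg]) hn.le)
  · have him : (z / (z + 1)).im = z.im / normSq (z + 1) := by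
      rw [Complex.div_im]
      simp only [add_re, add_im, one_re, one_im, add_zero]
      ring
    right
    rw [him]
    exact div_ne_zero h (normSq_pos.mpr hz1).ne'

lemma isPreconnected_slitPlane : IsPreconnected slitPlane :=
  starConvex_one_slitPlane.isPathConnected one_mem_slitPlane |>.isConnected.isPreconnected

end Complex

lemma eqOn_slitPlane_of_eq_of_im_pos [CompleteSpace V] {F G : ℂ → V}
    (hF : DifferentiableOn ℂ F slitPlane) (hG : DifferentiableOn ℂ G slitPlane)
    (hFG : ∀ z : ℂ, 0 < z.im → F z = G z) : EqOn F G slitPlane := by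
  have hU : {z : ℂ | 0 < z.im} ∈ 𝓝 I :=
    isOpen_lt continuous_const continuous_im |>.mem_nhds (by simp)
  exact (hF.analyticOnNhd isOpen_slitPlane).eqOn_of_preconnected_of_eventuallyEq
    (hG.analyticOnNhd isOpen_slitPlane) isPreconnected_slitPlane (by simp [mem_slitPlane_iff])
    (Filter.mem_of_superset hU hFG)

lemma tendsto_ofReal_mul_I_comap_im_atTop :
    Tendsto (fun t : ℝ => (t : ℂ) * I) atTop (comap im atTop) :=
  tendsto_comap_iff.mpr <| tendsto_id.congr fun t => by simp

lemma tendsto_neg_comap_im_atBot :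
    Tendsto (fun z : ℂ => -z) (comap im atBot) (comap im atTop) := by
  simpa [tendsto_comap_iff, Function.comp_def] using
    (tendsto_neg_atBot_atTop (G := ℝ)).comp tendsto_comap

lemma Function.Periodic.exists_tendsto_comap_im_atTop [FiniteDimensional ℂ V] {g : ℂ → V}
    {h : ℝ} (hh : 0 < h) (hg : Function.Periodic g h)
    (h_hol : ∀ᶠ z in comap im atTop, DifferentiableAt ℂ g z)
    (h_bd : BoundedAtFilter (comap im atTop) g) :
    ∃ A : V, Tendsto g (comap im atTop) (𝓝 A) := by
  -- Mathlib's `q`-expansion limit is for scalar functions: apply it to each coordinate.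
  let b := Module.finBasis ℂ V
  let φ : _ → V →L[ℂ] ℂ := fun i => LinearMap.toContinuousLinearMap (b.coord i)
  have hφ : ∀ i, Tendsto (fun z => φ i (g z)) (comap im atTop)
      (𝓝 (Function.Periodic.cuspFunction h (fun z => φ i (g z)) 0)) := fun i =>
    Function.Periodic.tendsto_at_I_inf hh (fun z => by simp only [hg z])
      (h_hol.mono fun z hz => (φ i).differentiableAt.comp z hz)
      ((φ i).isBigO_comp g _ |>.trans h_bd)
  refine ⟨∑ i, Function.Periodic.cuspFunction h (fun z => φ i (g z)) 0 • b i, ?_⟩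
  refine (tendsto_finsetSum Finset.univ fun i _ => (hφ i).smul_const (b i)).congr fun z => ?_
  simp [φ, b.sum_repr]

lemma exists_tendsto_comap_im_atTop_of_periodic_of_im_pos [FiniteDimensional ℂ V] {g : ℂ → V}
    {h : ℝ} (hh : 0 < h) (hg : ∀ z : ℂ, 0 < z.im → g (z + h) = g z)
    (h_hol : DifferentiableOn ℂ g {z | 0 < z.im}) (h_bd : ∃ C, ∀ z : ℂ, 1 ≤ z.im → ‖g z‖ ≤ C) :
    ∃ A : V, Tendsto g (comap im atTop) (𝓝 A) := by
  -- Extending `g` by zero off the upper half-plane gives a periodic function with the same germ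
  -- at `i∞`.
  set U : Set ℂ := {z | 0 < z.im}
  have hU : IsOpen U := isOpen_lt continuous_const continuous_im
  have hUmem : U ∈ comap im atTop := preimage_mem_comap (Ioi_mem_atTop 0)
  have hgU : U.indicator g =ᶠ[comap im atTop] g :=
    eventuallyEq_of_mem hUmem fun z hz => indicator_of_mem hz g
  obtain ⟨C, hC⟩ := h_bd
  have hper : Function.Periodic (U.indicator g) h := fun z => by
    by_cases hz : 0 < z.im
    · simp [U, indicator, hz, hg z hz]
    · simp [U, indicator, hz]
  have hhol : ∀ᶠ z in comap im atTop, DifferentiableAt ℂ (U.indicator g) z := by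
    filter_upwards [hUmem] with z hz
    exact (h_hol.differentiableAt (hU.mem_nhds hz)).congr_of_eventuallyEq
      (eventuallyEq_of_mem (hU.mem_nhds hz) fun w hw => indicator_of_mem hw g)
  have hbd : BoundedAtFilter (comap im atTop) (U.indicator g) := by
    refine (Asymptotics.IsBigO.of_bound C ?_).congr' hgU.symm EventuallyEq.rfl
    filter_upwards [preimage_mem_comap (Ici_mem_atTop 1)] with z hz
    simpa using hC z hz
  obtain ⟨A, hA⟩ := hper.exists_tendsto_comap_im_atTop hh hhol hbd
  exact ⟨A, hA.congr' hgU⟩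

lemma Smat_mul_Smat : Smat * Smat = negI := by decide

lemma Tmat_mul_Smat_mul_Tmat : Tmat * Smat * Tmat = Smat * Tmat⁻¹ * Smat := by decide

lemma MonoidHom.isOfFinOrder_of_finite_range {G H : Type*} [Monoid G] [LeftCancelMonoid H]
    (φ : G →* H) (hφ : (Set.range φ).Finite) (g : G) : IsOfFinOrder (φ g) :=
  finite_powers.mp <| hφ.subset <| by
    rintro _ ⟨n, rfl⟩
    exact ⟨g ^ n, map_pow φ g n⟩

lemma val_map_mul_apply {G : Type*} [Monoid G] (η : G →* (V →ₗ[ℂ] V)ˣ) (g h : G) (x : V) :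
    (η (g * h) : V →ₗ[ℂ] V) x = (η g : V →ₗ[ℂ] V) ((η h : V →ₗ[ℂ] V) x) := by
  rw [map_mul, Units.val_mul, Module.End.mul_apply]

lemma exp_mul_one_sub_exp_eq (ν : ℂ) :
    exp (π * I * ν) * (1 - exp (π * I * (-2 * ν - 1))) =
      exp (-(π * I * ν)) * (1 - exp (-(π * I) * (-2 * ν - 1))) := by
  have h₁ : exp (π * I * ν + π * I * (-2 * ν - 1)) = -exp (-(π * I * ν)) := by
    rw [show π * I * ν + π * I * (-2 * ν - 1) = -(π * I * ν) - π * I by ring, exp_sub,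
      exp_pi_mul_I, div_neg, div_one]
  have h₂ : exp (-(π * I * ν) + -(π * I) * (-2 * ν - 1)) = -exp (π * I * ν) := by
    rw [show -(π * I * ν) + -(π * I) * (-2 * ν - 1) = π * I * ν + π * I by ring, exp_add,
      exp_pi_mul_I, mul_neg_one]
  rw [mul_one_sub, mul_one_sub, ← exp_add, ← exp_add, h₁, h₂]
  ring

section Bruggeman

variable {η : SL2Z →* (V →ₗ[ℂ] V)ˣ} {ν : ℂ} {f ψ : ℂ → V}

def IsBruggemanTransform (ν : ℂ) (η : SL2Z →* (V →ₗ[ℂ] V)ˣ) (f ψ : ℂ → V) : Prop :=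
  ∀ z : ℂ, z.im ≠ 0 → ψ z = f z - (z ^ (-2 * ν - 1)) • (η Smat : V →ₗ[ℂ] V) (f (-z⁻¹))

lemma Smat_apply_Smat_apply (hη : η negI = 1) (x : V) :
    (η Smat : V →ₗ[ℂ] V) ((η Smat : V →ₗ[ℂ] V) x) = x := by
  rw [← val_map_mul_apply, Smat_mul_Smat, hη, Units.val_one, Module.End.one_apply]

lemma MemFeta.apply_add_nat (hf : MemFeta η f) (n : ℕ) {z : ℂ} (hz : z.im ≠ 0) :
    f (z + n) = (η (Tmat ^ n) : V →ₗ[ℂ] V) (f z) := by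
  induction n with
  | zero => simp
  | succ n ih =>
    rw [Nat.cast_succ, ← add_assoc, hf.periodic _ (by simpa using hz), ih, pow_succ',
      val_map_mul_apply]

lemma MemFeta.apply_add_orderOf (hf : MemFeta η f) {z : ℂ} (hz : z.im ≠ 0) :
    f (z + orderOf (η Tmat)) = f z := by
  rw [hf.apply_add_nat _ hz, map_pow, pow_orderOf_eq_one, Units.val_one, Module.End.one_apply]

lemma IsBruggemanTransform.lewisCombo_eq (hψ : IsBruggemanTransform ν η f ψ) (hη : η negI = 1)
    {z : ℂ} (hz : z.im ≠ 0) :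
    lewisCombo ν η ψ z = (1 - z ^ (-2 * ν - 1) * (-z⁻¹) ^ (-2 * ν - 1)) • f z := by
  have hz' : (-z⁻¹).im ≠ 0 := by
    rw [im_neg_inv]
    exact div_ne_zero hz (normSq_pos.mpr (ne_zero_of_im_ne_zero hz)).ne'
  rw [lewisCombo, hψ z hz, hψ _ hz', inv_neg, inv_inv, neg_neg]
  simp only [map_sub, map_smul, Smat_apply_Smat_apply hη, smul_sub, smul_smul, sub_smul, one_smul]
  abel

lemma IsBruggemanTransform.lewis_of_im_pos (hψ : IsBruggemanTransform ν η f ψ)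
    (hf : MemFeta η f) {z : ℂ} (hz : 0 < z.im) :
    (η Tmat : V →ₗ[ℂ] V) (ψ z) =
      ψ (z + 1) + ((z + 1) ^ (-2 * ν - 1)) •
        (η (Smat * Tmat⁻¹) : V →ₗ[ℂ] V) (ψ (z / (z + 1))) := by
  have hz0 : z ≠ 0 := ne_zero_of_im_ne_zero hz.ne'
  have hz1 : 0 < (z + 1).im := by simpa using hz
  have hz10 : z + 1 ≠ 0 := ne_zero_of_im_ne_zero hz1.ne'
  have hzdiv : 0 < (z / (z + 1)).im := by
    rw [show z / (z + 1) = -(z + 1)⁻¹ + 1 by field_simp; ring]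
    simpa using im_neg_inv_pos hz1
  have hw : 0 < (-z⁻¹ - 1).im := by simpa using im_neg_inv_pos hz
  have hf₁ : f (z + 1) = (η Tmat : V →ₗ[ℂ] V) (f z) := hf.periodic z hz.ne'
  have hf₂ : f (z / (z + 1)) = (η Tmat : V →ₗ[ℂ] V) (f (-(z + 1)⁻¹)) := by
    rw [show z / (z + 1) = -(z + 1)⁻¹ + 1 by field_simp; ring]
    exact hf.periodic _ (im_neg_inv_pos hz1).ne'
  have hf₃ : f (-z⁻¹) = (η Tmat : V →ₗ[ℂ] V) (f (-z⁻¹ - 1)) := by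
    rw [← hf.periodic _ hw.ne', sub_add_cancel]
  have hinv : -(z / (z + 1))⁻¹ = -z⁻¹ - 1 := by field_simp; ring
  rw [hψ z hz.ne', hψ (z + 1) hz1.ne', hψ _ hzdiv.ne', hinv, hf₁, hf₂, hf₃]
  simp only [map_sub, map_smul, smul_sub, smul_smul, ← val_map_mul_apply, ← mul_assoc,
    inv_mul_cancel_right, Tmat_mul_Smat_mul_Tmat, add_one_cpow_mul_div_add_one_cpow hz]
  abel

lemma IsBruggemanTransform.lewis [FiniteDimensional ℂ V] (hψ : IsBruggemanTransform ν η f ψ)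
    (hf : MemFeta η f) (hψholo : DifferentiableOn ℂ ψ slitPlane) {z : ℂ} (hz : z ∈ slitPlane) :
    (η Tmat : V →ₗ[ℂ] V) (ψ z) =
      ψ (z + 1) + ((z + 1) ^ (-2 * ν - 1)) •
        (η (Smat * Tmat⁻¹) : V →ₗ[ℂ] V) (ψ (z / (z + 1))) := by
  have hT := (LinearMap.toContinuousLinearMap (η Tmat : V →ₗ[ℂ] V)).differentiable
  have hC := (LinearMap.toContinuousLinearMap (η (Smat * Tmat⁻¹) : V →ₗ[ℂ] V)).differentiable
  have hshift : DifferentiableOn ℂ (fun z : ℂ => z + 1) slitPlane := differentiableOn_id.add_const 1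
  have hmoeb : DifferentiableOn ℂ (fun z : ℂ => z / (z + 1)) slitPlane :=
    differentiableOn_id.div hshift fun z hz => slitPlane_ne_zero (add_one_mem_slitPlane hz)
  refine eqOn_slitPlane_of_eq_of_im_pos (F := fun z => (η Tmat : V →ₗ[ℂ] V) (ψ z))
    (hT.comp_differentiableOn hψholo) ?_ (fun z hz => hψ.lewis_of_im_pos hf hz) hz
  exact (hψholo.comp hshift fun z => add_one_mem_slitPlane).add
    ((hshift.cpow_const fun z => add_one_mem_slitPlane).smul
      (hC.comp_differentiableOn (hψholo.comp hmoeb fun z => div_add_one_mem_slitPlane)))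

lemma MemFeta.exists_tendsto_comap_im [FiniteDimensional ℂ V] (hf : MemFeta η f)
    (hη : (Set.range η).Finite) :
    ∃ a b : V, Tendsto f (comap im atTop) (𝓝 a) ∧ Tendsto f (comap im atBot) (𝓝 b) ∧
      a + b = 0 := by
  obtain ⟨a, b, ha, hb, hab⟩ := hf.limits
  obtain ⟨C, hC⟩ := hf.bounded
  set N := orderOf (η Tmat)
  have hN : (0 : ℝ) < N := Nat.cast_pos.mpr (η.isOfFinOrder_of_finite_range hη Tmat).orderOf_pos
  obtain ⟨A, hA⟩ := exists_tendsto_comap_im_atTop_of_periodic_of_im_pos hN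
    (fun z hz => by exact_mod_cast hf.apply_add_orderOf hz.ne')
    (hf.holo.mono fun z (hz : 0 < z.im) => hz.ne')
    ⟨C, fun z hz => hC z (hz.trans (le_abs_self _))⟩
  obtain ⟨B, hB⟩ := exists_tendsto_comap_im_atTop_of_periodic_of_im_pos (g := fun z => f (-z)) hN
    (fun z hz => by
      rw [Complex.ofReal_natCast, ← hf.apply_add_orderOf (z := -(z + N)) (by simpa using hz.ne')]
      congr 1; ring)
    (hf.holo.comp (differentiableOn_neg _) fun z (hz : 0 < z.im) => by simpa using hz.ne')
    ⟨C, fun z hz => hC (-z) (by simpa using hz.trans (le_abs_self _))⟩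
  refine ⟨a, b, tendsto_nhds_unique (hA.comp tendsto_ofReal_mul_I_comap_im_atTop) ha ▸ hA, ?_, hab⟩
  rw [← tendsto_nhds_unique (hB.comp tendsto_ofReal_mul_I_comap_im_atTop) hb]
  simpa [Function.comp_def] using hB.comp tendsto_neg_comap_im_atBot

lemma IsBruggemanTransform.tendsto_lewisCombo_atTop (hψ : IsBruggemanTransform ν η f ψ)
    (hη : η negI = 1) {a : V} (ha : Tendsto f (comap im atTop) (𝓝 a)) :
    Tendsto (lewisCombo ν η ψ) (comap im atTop) (𝓝 ((1 - exp (π * I * (-2 * ν - 1))) • a)) := by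
  refine (ha.const_smul _).congr' ?_
  filter_upwards [preimage_mem_comap (Ioi_mem_atTop 0)] with z (hz : 0 < z.im)
  rw [hψ.lewisCombo_eq hη hz.ne', cpow_mul_neg_inv_cpow_of_im_pos hz]

lemma IsBruggemanTransform.tendsto_lewisCombo_atBot (hψ : IsBruggemanTransform ν η f ψ)
    (hη : η negI = 1) {b : V} (hb : Tendsto f (comap im atBot) (𝓝 b)) :
    Tendsto (lewisCombo ν η ψ) (comap im atBot)
      (𝓝 ((1 - exp (-(π * I) * (-2 * ν - 1))) • b)) := by
  refine (hb.const_smul _).congr' ?_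
  filter_upwards [preimage_mem_comap (Iio_mem_atBot 0)] with z (hz : z.im < 0)
  rw [hψ.lewisCombo_eq hη hz.ne, cpow_mul_neg_inv_cpow_of_im_neg hz]

end Bruggeman

theorem bruggeman_forward_general [FiniteDimensional ℂ V]
    (η : SL2Z →* (V →ₗ[ℂ] V)ˣ) (hη1 : η negI = 1) (hηfin : (Set.range η).Finite)
    (ν : ℂ) (f : ℂ → V) (hf : MemFeta η f)
    (ψ : ℂ → V) (hψholo : DifferentiableOn ℂ ψ Complex.slitPlane)
    (hψeq : ∀ z : ℂ, z.im ≠ 0 →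
      ψ z = f z - (z ^ (-2 * ν - 1)) • (η Smat : V →ₗ[ℂ] V) (f (-z⁻¹))) :
    MemPsi ν η ψ := by
  have hψ : IsBruggemanTransform ν η f ψ := hψeq
  obtain ⟨a, b, ha, hb, hab⟩ := hf.exists_tendsto_comap_im hηfin
  refine ⟨hψholo, fun z hz => hψ.lewis hf hψholo hz, _, _,
    hψ.tendsto_lewisCombo_atTop hη1 ha, hψ.tendsto_lewisCombo_atBot hη1 hb, ?_⟩
  rw [smul_smul, smul_smul, eq_neg_of_add_eq_zero_right hab, smul_neg, ← sub_eq_add_neg,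
    ← sub_smul, exp_mul_one_sub_exp_eq, sub_self, zero_smul]

/-- **Bruggeman transform, forward direction** (part of Proposition 2.3 of the paper):
if `f ∈ F_η` and `ψ(z) = f(z) - z^{-2ν-1} η(S) f(-1/z)` extends holomorphically to the
slit plane, then the extension satisfies the Lewis equation and the limit condition,
i.e. it belongs to `Ψ_{ν,η}`. -/
theorem bruggeman_forward [FiniteDimensional ℂ V] [Nontrivial V]
    (η : SL2Z →* (V →ₗ[ℂ] V)ˣ) (hη1 : η negI = 1) (hηfin : (Set.range η).Finite)
    (ν : ℂ) (f : ℂ → V) (hf : MemFeta η f)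
    (ψ : ℂ → V) (hψholo : DifferentiableOn ℂ ψ Complex.slitPlane)
    (hψeq : ∀ z : ℂ, z.im ≠ 0 →
      ψ z = f z - (z ^ (-2 * ν - 1)) • (η Smat : V →ₗ[ℂ] V) (f (-z⁻¹))) :
    MemPsi ν η ψ :=
  bruggeman_forward_general η hη1 hηfin ν f hf ψ hψholo hψeq
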